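/- Let F be a tree and m a positive integer, and suppose Y is a tree with s'(F,Y) ≡ 0 (mod m), where s' counts induced F-matchings. Construct the rooted tree Z' by taking Δ(F)+2 disjoint copies of Y, adding a new root r, joining one copy to r by an edge, and joining each of the other Δ(F)+1 copies to r by a path of length two. If a tree T has an edge {u,v} with T^{(u,v)} ≅ Z', then s'(F,T) ≡ 0 (mod m). -/

import Mathlib

/-!
Let `w₀` be the root of `Z'` and `w₁, …, w_{Δ+1}` the middle vertices of its paths, so that the
copy `Yᵢ` of `Y` meets the rest of `T` only through `wᵢ`. Every induced `F`-matching leaves some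
`wᵢ` uncovered: if the copy of `F` through `w₀` also covered all `wⱼ`, inducedness would put the
`Δ + 1` edges `w₀wⱼ` into that copy. Choose such an `i` by looking only at covered vertices
outside all `Yᵢ`. As `F` is connected, a copy of `F` meeting `Yᵢ` but not contained in it would
cover `wᵢ`; so the matchings with a given part outside `Yᵢ` are exactly that part together with an
induced `F`-matching of `Yᵢ ≅ Y`, and `s'(F,T)` is a sum of terms `s'(F,Y)`.
-/

open SimpleGraph

/-- A subgraph `H` of `G` is a copy of `F` if `H` (as a graph on its vertex set)
is isomorphic to `F`. -/
def SimpleGraph.Subgraph.IsCopyOf {VG VF : Type*} {G : SimpleGraph VG}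
    (H : G.Subgraph) (F : SimpleGraph VF) : Prop :=
  Nonempty (H.coe ≃g F)

/-- An `F`-matching in `G` is a finite set of pairwise vertex-disjoint copies of `F`
in `G`. -/
def IsFMatching {VF VG : Type*} (F : SimpleGraph VF) (G : SimpleGraph VG)
    (M : Finset G.Subgraph) : Prop :=
  (∀ H ∈ M, H.IsCopyOf F) ∧
    (M : Set G.Subgraph).Pairwise fun H K => Disjoint H.verts K.verts

/-- `s(F,G)`: the number of `F`-matchings in `G`. -/
noncomputable def numFMatchings {VF VG : Type*} (F : SimpleGraph VF)
    (G : SimpleGraph VG) : ℕ :=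
  Set.ncard {M : Finset G.Subgraph | IsFMatching F G M}

/-- An induced `F`-matching: an `F`-matching such that no edge of `G` joins two
covered vertices other than the edges of the copies themselves. -/
def IsInducedFMatching {VF VG : Type*} (F : SimpleGraph VF) (G : SimpleGraph VG)
    (M : Finset G.Subgraph) : Prop :=
  IsFMatching F G M ∧
    ∀ a b : VG, G.Adj a b → (∃ H ∈ M, a ∈ H.verts) → (∃ H ∈ M, b ∈ H.verts) →
      ∃ H ∈ M, H.Adj a b

/-- `s'(F,G)`: the number of induced `F`-matchings in `G`. -/
noncomputable def numInducedFMatchings {VF VG : Type*} (F : SimpleGraph VF)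
    (G : SimpleGraph VG) : ℕ :=
  Set.ncard {M : Finset G.Subgraph | IsInducedFMatching F G M}

/-- The nullifying rooted tree `Z'` of Lemma 3.1: `D + 2` disjoint copies of `Y`
together with a new root `none`; copy `0` is joined to the root by an edge (at
its vertex `y₀ 0`), and each of the remaining `D + 1` copies is joined to the
root via a path of length two through the middle vertex `some (inr j)`. -/
def nullifyingTree' (D : ℕ) {VY : Type*} (Y : SimpleGraph VY)
    (y₀ : Fin (D + 2) → VY) :
    SimpleGraph (Option ((Fin (D + 2) × VY) ⊕ Fin (D + 1))) :=
  SimpleGraph.fromRel fun a b =>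
    match a, b with
    | some (.inl (i, y)), some (.inl (j, y')) => i = j ∧ Y.Adj y y'
    | none, some (.inl (i, y)) => i = 0 ∧ y = y₀ 0
    | none, some (.inr _) => True
    | some (.inr j), some (.inl (i, y)) => i = j.succ ∧ y = y₀ j.succ
    | _, _ => False

open Function

lemma Set.dvd_ncard_of_dvd_ncard_fiber {α β : Type*} {s : Set α} (hs : s.Finite) (f : α → β)
    {k : ℕ} (h : ∀ a ∈ s, k ∣ {x ∈ s | f x = f a}.ncard) : k ∣ s.ncard := by
  classical
  rw [Set.ncard_eq_toFinset_card s hs, Finset.card_eq_sum_card_image f]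
  refine Finset.dvd_sum fun b hb => ?_
  obtain ⟨a, ha, rfl⟩ := Finset.mem_image.mp hb
  have hfiber : (({x ∈ hs.toFinset | f x = f a} : Finset α) : Set α) = {x ∈ s | f x = f a} := by
    ext; simp
  rw [← Set.ncard_coe_finset, hfiber]
  exact h a (hs.mem_toFinset.mp ha)

section

variable {VF V W : Type*} {F : SimpleGraph VF} {G : SimpleGraph V}

def coveredVerts (M : Finset G.Subgraph) : Set V := ⋃ H ∈ M, H.verts

lemma mem_coveredVerts {M : Finset G.Subgraph} {x : V} :
    x ∈ coveredVerts M ↔ ∃ H ∈ M, x ∈ H.verts := by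
  simp [coveredVerts]

def SimpleGraph.outerBoundary (G : SimpleGraph V) (Z : Set V) : Set V :=
  {a | a ∉ Z ∧ ∃ b ∈ Z, G.Adj a b}

lemma IsFMatching.eq_of_mem_verts {M : Finset G.Subgraph} (hM : IsFMatching F G M)
    {H K : G.Subgraph} (hH : H ∈ M) (hK : K ∈ M) {x : V} (hxH : x ∈ H.verts)
    (hxK : x ∈ K.verts) : H = K := by
  by_contra hne
  exact Set.disjoint_left.mp (hM.2 hH hK hne) hxH hxK

namespace IsInducedFMatching

variable {M c : Finset G.Subgraph}

lemma adj_of_mem_verts (hM : IsInducedFMatching F G M) {H : G.Subgraph} (hH : H ∈ M)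
    {a b : V} (hab : G.Adj a b) (ha : a ∈ H.verts) (hb : b ∈ coveredVerts M) : H.Adj a b := by
  obtain ⟨K, hK, hKab⟩ := hM.2 a b hab ⟨H, hH, ha⟩ (mem_coveredVerts.mp hb)
  rwa [hM.1.eq_of_mem_verts hK hH (K.edge_vert hKab) ha] at hKab

lemma mono (hM : IsInducedFMatching F G M) (hc : c ⊆ M) : IsInducedFMatching F G c := by
  refine ⟨⟨fun H hH => hM.1.1 H (hc hH), hM.1.2.mono (Finset.coe_subset.mpr hc)⟩, ?_⟩
  rintro a b hab ⟨H, hH, ha⟩ hb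
  exact ⟨H, hH, hM.adj_of_mem_verts (hc hH) hab ha
    (mem_coveredVerts.mpr (hb.imp fun K hK => ⟨hc hK.1, hK.2⟩))⟩

/-- By inducedness the covered neighbours of `v` are its neighbours in `H ≅ F`. -/
lemma card_le_maxDegree [Fintype VF] [DecidableRel F.Adj] (hM : IsInducedFMatching F G M)
    {H : G.Subgraph} (hH : H ∈ M) {v : V} (hv : v ∈ H.verts) (s : Finset V)
    (hs : ∀ x ∈ s, G.Adj v x ∧ x ∈ coveredVerts M) : s.card ≤ F.maxDegree := by
  classical
  obtain ⟨f⟩ := hM.1.1 H hH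
  have hadj : ∀ x : s, H.Adj v x := fun x => hM.adj_of_mem_verts hH (hs x x.2).1 hv (hs x x.2).2
  let g : s → F.neighborSet (f ⟨v, hv⟩) := fun x =>
    ⟨f ⟨x, H.edge_vert (hadj x).symm⟩, f.map_rel_iff.mpr (hadj x)⟩
  have hg : Injective g := fun x y hxy =>
    Subtype.ext (Subtype.mk.inj (f.injective (Subtype.ext_iff.mp hxy)))
  calc s.card = Fintype.card s := (Fintype.card_coe s).symm
    _ ≤ Fintype.card (F.neighborSet (f ⟨v, hv⟩)) := Fintype.card_le_of_injective g hg
    _ = F.degree (f ⟨v, hv⟩) := F.card_neighborSet_eq_degree _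
    _ ≤ F.maxDegree := F.degree_le_maxDegree _

lemma union [DecidableEq G.Subgraph] {Z : Set V} {N : Finset G.Subgraph}
    (hc : IsInducedFMatching F G c) (hN : IsInducedFMatching F G N)
    (hcZ : ∀ H ∈ c, Disjoint H.verts Z) (hNZ : ∀ H ∈ N, H.verts ⊆ Z) (hbd : Disjoint (G.outerBoundary Z) (coveredVerts c)) :
    IsInducedFMatching F G (c ∪ N) := by
  have hsep : ∀ a b, G.Adj a b → a ∈ coveredVerts c → b ∈ coveredVerts N → False := by
    intro a b hab ha hb
    obtain ⟨H, hH, haH⟩ := mem_coveredVerts.mp ha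
    obtain ⟨K, hK, hbK⟩ := mem_coveredVerts.mp hb
    exact Set.disjoint_left.mp hbd
      ⟨Set.disjoint_left.mp (hcZ H hH) haH, b, hNZ K hK hbK, hab⟩ ha
  refine ⟨⟨fun H hH => ?_, ?_⟩, ?_⟩
  · rcases Finset.mem_union.mp hH with hH | hH
    exacts [hc.1.1 H hH, hN.1.1 H hH]
  · rw [Finset.coe_union, Set.pairwise_union]
    refine ⟨hc.1.2, hN.1.2, fun H hH K hK _ => ?_⟩
    have hHK : Disjoint H.verts K.verts := (hcZ H hH).mono_right (hNZ K hK)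
    exact ⟨hHK, hHK.symm⟩
  · rintro a b hab ⟨H, hH, haH⟩ ⟨K, hK, hbK⟩
    rcases Finset.mem_union.mp hH with hH | hH <;> rcases Finset.mem_union.mp hK with hK | hK
    · obtain ⟨L, hL, h⟩ := hc.2 a b hab ⟨H, hH, haH⟩ ⟨K, hK, hbK⟩
      exact ⟨L, Finset.mem_union_left _ hL, h⟩
    · exact (hsep a b hab (mem_coveredVerts.mpr ⟨H, hH, haH⟩)
        (mem_coveredVerts.mpr ⟨K, hK, hbK⟩)).elim
    · exact (hsep b a hab.symm (mem_coveredVerts.mpr ⟨K, hK, hbK⟩)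
        (mem_coveredVerts.mpr ⟨H, hH, haH⟩)).elim
    · obtain ⟨L, hL, h⟩ := hN.2 a b hab ⟨H, hH, haH⟩ ⟨K, hK, hbK⟩
      exact ⟨L, Finset.mem_union_right _ hL, h⟩

end IsInducedFMatching

lemma isInducedFMatching_empty : IsInducedFMatching F G ∅ :=
  ⟨⟨by simp, by simp⟩, by simp⟩

namespace SimpleGraph.Subgraph

lemma IsCopyOf.verts_nonempty [Nonempty VF] {H : G.Subgraph} (h : H.IsCopyOf F) :
    H.verts.Nonempty := by
  obtain ⟨f⟩ := h
  exact ⟨_, (f.symm (Classical.arbitrary VF)).2⟩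

lemma IsCopyOf.preconnected {H : G.Subgraph} (h : H.IsCopyOf F) (hF : F.Preconnected) :
    H.coe.Preconnected := by
  obtain ⟨f⟩ := h
  exact f.preconnected_iff.mpr hF

lemma verts_subset_or_disjoint {H : G.Subgraph} (hH : H.coe.Preconnected) {Z : Set V}
    (hZ : Disjoint (G.outerBoundary Z) H.verts) : H.verts ⊆ Z ∨ Disjoint H.verts Z := by
  by_contra! h
  obtain ⟨x, hxH, hxZ⟩ := Set.not_subset.mp h.1
  obtain ⟨y, hyH, hyZ⟩ := Set.not_disjoint_iff.mp h.2
  obtain ⟨p⟩ := hH ⟨x, hxH⟩ ⟨y, hyH⟩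
  obtain ⟨d, -, hd₁, hd₂⟩ :=
    p.exists_boundary_dart {w : H.verts | (w : V) ∉ Z} hxZ (by simpa using hyZ)
  exact Set.disjoint_left.mp hZ ⟨hd₁, d.snd, not_not.mp hd₂, H.adj_sub d.adj⟩ d.fst.2

variable {Y : SimpleGraph W} (f : Y ↪g G)

lemma map_adj_apply (N : Y.Subgraph) {a b : W} :
    (N.map f.toHom).Adj (f a) (f b) ↔ N.Adj a b :=
  Relation.map_apply_apply f.injective f.injective _ _ _

lemma comap_map_of_embedding (N : Y.Subgraph) : (N.map f.toHom).comap f.toHom = N := by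
  ext a b
  · exact f.injective.mem_set_image
  · exact (and_congr_right fun _ => map_adj_apply f N).trans ⟨And.right, fun h => ⟨N.adj_sub h, h⟩⟩

lemma map_comap_of_subset_range {H : G.Subgraph} (hH : H.verts ⊆ Set.range f) :
    (H.comap f.toHom).map f.toHom = H := by
  ext a b
  · exact Set.ext_iff.mp (Set.image_preimage_eq_of_subset hH) a
  · constructor
    · rintro ⟨x, y, ⟨-, h⟩, rfl, rfl⟩
      exact h
    · intro h
      obtain ⟨x, rfl⟩ := hH (H.edge_vert h)
      obtain ⟨y, rfl⟩ := hH (H.edge_vert h.symm)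
      exact ⟨x, y, ⟨f.map_rel_iff.mp (H.adj_sub h), h⟩, rfl, rfl⟩

lemma map_injective_of_embedding : Injective (Subgraph.map f.toHom) := fun N N' h => by
  rw [← comap_map_of_embedding f N, h, comap_map_of_embedding]

noncomputable def coeIsoMap (N : Y.Subgraph) : N.coe ≃g (N.map f.toHom).coe where
  toEquiv := Equiv.Set.image f N.verts f.injective
  map_rel_iff' := map_adj_apply f N

lemma isCopyOf_map_iff (N : Y.Subgraph) : (N.map f.toHom).IsCopyOf F ↔ N.IsCopyOf F :=
  ⟨fun ⟨e⟩ => ⟨(coeIsoMap f N).trans e⟩, fun ⟨e⟩ => ⟨(coeIsoMap f N).symm.trans e⟩⟩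

end SimpleGraph.Subgraph

section Embedding

variable {Y : SimpleGraph W} (f : Y ↪g G)

lemma isInducedFMatching_image_map_iff [DecidableEq G.Subgraph] (N : Finset Y.Subgraph) :
    IsInducedFMatching F G (N.image (Subgraph.map f.toHom)) ↔ IsInducedFMatching F Y N := by
  have hcov : ∀ {y : W}, (∃ H ∈ N.image (Subgraph.map f.toHom), f y ∈ H.verts) ↔
      ∃ K ∈ N, y ∈ K.verts := by
    intro y
    simp only [Finset.exists_mem_image, Subgraph.map_verts, RelEmbedding.coe_toRelHom]
    exact exists_congr fun K => and_congr_right fun _ => f.injective.mem_set_image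
  refine and_congr (and_congr ?_ ?_) ⟨fun h y y' hyy' hy hy' => ?_, fun h a b hab ha hb => ?_⟩
  · simp only [Finset.forall_mem_image, Subgraph.isCopyOf_map_iff]
  · rw [Finset.coe_image, (Subgraph.map_injective_of_embedding f).injOn.pairwise_image]
    simp only [Set.Pairwise, onFun_apply, Subgraph.map_verts, RelEmbedding.coe_toRelHom,
      Set.disjoint_image_iff f.injective]
  · obtain ⟨H, hH, hHy⟩ := h (f y) (f y') (f.map_rel_iff.mpr hyy') (hcov.mpr hy) (hcov.mpr hy')
    obtain ⟨K, hK, rfl⟩ := Finset.mem_image.mp hH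
    exact ⟨K, hK, (Subgraph.map_adj_apply f K).mp hHy⟩
  · have hrange : ∀ {x}, (∃ H ∈ N.image (Subgraph.map f.toHom), x ∈ H.verts) →
        x ∈ Set.range f := by
      rintro x ⟨H, hH, hx⟩
      obtain ⟨K, -, rfl⟩ := Finset.mem_image.mp hH
      obtain ⟨y, -, rfl⟩ := hx
      exact ⟨y, rfl⟩
    obtain ⟨y, rfl⟩ := hrange ha
    obtain ⟨y', rfl⟩ := hrange hb
    obtain ⟨K, hK, hKy⟩ := h y y' (f.map_rel_iff.mp hab) (hcov.mp ha) (hcov.mp hb)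
    exact ⟨_, Finset.mem_image_of_mem _ hK, (Subgraph.map_adj_apply f K).mpr hKy⟩

lemma ncard_inducedFMatchings_subset_range :
    {M : Finset G.Subgraph | IsInducedFMatching F G M ∧ ∀ H ∈ M, H.verts ⊆ Set.range f}.ncard =
      numInducedFMatchings F Y := by
  classical
  have himage : {M : Finset G.Subgraph | IsInducedFMatching F G M ∧
      ∀ H ∈ M, H.verts ⊆ Set.range f} =
      Finset.image (Subgraph.map f.toHom) '' {N | IsInducedFMatching F Y N} := by
    ext M
    constructor
    · rintro ⟨hM, hMf⟩
      have hM' : (M.image (Subgraph.comap f.toHom)).image (Subgraph.map f.toHom) = M := by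
        rw [Finset.image_image]
        conv_rhs => rw [← Finset.image_id (s := M)]
        exact Finset.image_congr fun H hH => Subgraph.map_comap_of_subset_range f (hMf H hH)
      refine ⟨M.image (Subgraph.comap f.toHom), ?_, hM'⟩
      rw [Set.mem_ofPred_eq, ← isInducedFMatching_image_map_iff f, hM']
      exact hM
    · rintro ⟨N, hN, rfl⟩
      refine ⟨(isInducedFMatching_image_map_iff f N).mpr hN, ?_⟩
      simp only [Finset.forall_mem_image, Subgraph.map_verts]
      exact fun _ _ => Set.image_subset_range _ _
  rw [himage, Set.ncard_image_of_injective _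
    (Finset.image_injective (Subgraph.map_injective_of_embedding f))]
  rfl

lemma ncard_extensions_eq [Nonempty VF] [DecidableEq G.Subgraph] {c : Finset G.Subgraph}
    (hc : IsInducedFMatching F G c) (hcZ : ∀ H ∈ c, Disjoint H.verts (Set.range f))
    (hbd : Disjoint (G.outerBoundary (Set.range f)) (coveredVerts c)) :
    {M | IsInducedFMatching F G M ∧ c ⊆ M ∧ ∀ H ∈ M \ c, H.verts ⊆ Set.range f}.ncard =
      numInducedFMatchings F Y := by
  have hdisj : ∀ N : Finset G.Subgraph, IsInducedFMatching F G N →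
      (∀ H ∈ N, H.verts ⊆ Set.range f) → Disjoint c N := by
    refine fun N hN hNf => Finset.disjoint_left.mpr fun H hHc hHN => ?_
    obtain ⟨x, hx⟩ := (hN.1.1 H hHN).verts_nonempty
    exact Set.disjoint_left.mp (hcZ H hHc) hx (hNf H hHN hx)
  have himage : {M | IsInducedFMatching F G M ∧ c ⊆ M ∧ ∀ H ∈ M \ c, H.verts ⊆ Set.range f} =
      (c ∪ ·) '' {N | IsInducedFMatching F G N ∧ ∀ H ∈ N, H.verts ⊆ Set.range f} := by
    ext M
    constructor
    · rintro ⟨hM, hcM, hMf⟩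
      exact ⟨M \ c, ⟨hM.mono Finset.sdiff_subset, hMf⟩, Finset.union_sdiff_of_subset hcM⟩
    · rintro ⟨N, ⟨hN, hNf⟩, rfl⟩
      refine ⟨hc.union hN hcZ hNf hbd, Finset.subset_union_left, ?_⟩
      rwa [Finset.union_sdiff_cancel_left (hdisj N hN hNf)]
  rw [himage, Set.InjOn.ncard_image, ncard_inducedFMatchings_subset_range]
  rintro N₁ ⟨hN₁, hN₁f⟩ N₂ ⟨hN₂, hN₂f⟩ h
  rw [← Finset.union_sdiff_cancel_left (hdisj _ hN₁ hN₁f), ← Finset.union_sdiff_cancel_left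
    (hdisj _ hN₂ hN₂f)]
  exact congrArg (· \ c) h

end Embedding

section FreeCopy

variable {ι : Type*} [Nonempty ι] {Y : SimpleGraph W} (φ : ι → Y ↪g G)

/-- Only the covered vertices outside all copies of `Y` are consulted, so adding or removing
copies of `F` inside the copies of `Y` does not change the choice. -/
noncomputable def freeCopy (M : Finset G.Subgraph) : ι :=
  Classical.epsilon fun i =>
    Disjoint (G.outerBoundary (Set.range (φ i))) (coveredVerts M \ ⋃ j, Set.range (φ j))

open Classical in
noncomputable def outsideFreeCopy (M : Finset G.Subgraph) : Finset G.Subgraph :=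
  M.filter fun H => ¬ H.verts ⊆ Set.range (φ (freeCopy φ M))

lemma freeCopy_eq_of_subset [DecidableEq G.Subgraph] {M c : Finset G.Subgraph} (hcM : c ⊆ M)
    (hMc : ∀ H ∈ M \ c, H.verts ⊆ ⋃ j, Set.range (φ j)) : freeCopy φ M = freeCopy φ c := by
  have hcov : coveredVerts M \ ⋃ j, Set.range (φ j) = coveredVerts c \ ⋃ j, Set.range (φ j) := by
    ext x
    simp only [Set.mem_sdiff, mem_coveredVerts]
    constructor
    · rintro ⟨⟨H, hH, hx⟩, hxU⟩
      by_cases hHc : H ∈ c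
      · exact ⟨⟨H, hHc, hx⟩, hxU⟩
      · exact (hxU (hMc H (Finset.mem_sdiff.mpr ⟨hH, hHc⟩) hx)).elim
    · rintro ⟨⟨H, hH, hx⟩, hxU⟩
      exact ⟨⟨H, hcM hH, hx⟩, hxU⟩
  rw [freeCopy, hcov, freeCopy]

lemma outsideFreeCopy_subset (M : Finset G.Subgraph) : outsideFreeCopy φ M ⊆ M := by
  classical
  exact Finset.filter_subset _ _

lemma freeCopy_outsideFreeCopy (M : Finset G.Subgraph) :
    freeCopy φ (outsideFreeCopy φ M) = freeCopy φ M := by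
  classical
  refine (freeCopy_eq_of_subset φ (outsideFreeCopy_subset φ M) fun H hH => ?_).symm
  obtain ⟨hHM, hHc⟩ := Finset.mem_sdiff.mp hH
  have : H.verts ⊆ Set.range (φ (freeCopy φ M)) := by
    by_contra h
    exact hHc (Finset.mem_filter.mpr ⟨hHM, h⟩)
  exact this.trans (Set.subset_iUnion (fun j => Set.range (φ j)) _)

lemma outsideFreeCopy_eq_iff [DecidableEq G.Subgraph] {M c : Finset G.Subgraph}
    (hc : ∀ H ∈ c, ¬ H.verts ⊆ Set.range (φ (freeCopy φ c))) :
    outsideFreeCopy φ M = c ↔ c ⊆ M ∧ ∀ H ∈ M \ c, H.verts ⊆ Set.range (φ (freeCopy φ c)) := by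
  classical
  constructor
  · rintro rfl
    refine ⟨outsideFreeCopy_subset φ M, fun H hH => ?_⟩
    obtain ⟨hHM, hHc⟩ := Finset.mem_sdiff.mp hH
    rw [freeCopy_outsideFreeCopy]
    by_contra h
    exact hHc (Finset.mem_filter.mpr ⟨hHM, h⟩)
  · rintro ⟨hcM, hMc⟩
    have hfree : freeCopy φ M = freeCopy φ c := freeCopy_eq_of_subset φ hcM fun H hH =>
      (hMc H hH).trans (Set.subset_iUnion (fun j => Set.range (φ j)) _)
    ext H
    rw [outsideFreeCopy, Finset.mem_filter, hfree]
    constructor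
    · rintro ⟨hHM, hHZ⟩
      by_contra hHc
      exact hHZ (hMc H (Finset.mem_sdiff.mpr ⟨hHM, hHc⟩))
    · exact fun hHc => ⟨hcM hHc, hc H hHc⟩

lemma disjoint_outerBoundary_freeCopy
    (hU : ∀ i, Disjoint (G.outerBoundary (Set.range (φ i))) (⋃ j, Set.range (φ j)))
    {M : Finset G.Subgraph}
    (hM : ∃ i, Disjoint (G.outerBoundary (Set.range (φ i))) (coveredVerts M)) :
    Disjoint (G.outerBoundary (Set.range (φ (freeCopy φ M)))) (coveredVerts M) := by
  have hiff : ∀ i, Disjoint (G.outerBoundary (Set.range (φ i)))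
      (coveredVerts M \ ⋃ j, Set.range (φ j)) ↔
      Disjoint (G.outerBoundary (Set.range (φ i))) (coveredVerts M) := fun i =>
    ⟨fun h => (Set.disjoint_union_right.mpr ⟨h, hU i⟩).mono_right (Set.subset_sdiff_union _ _),
      fun h => h.mono_right Set.sdiff_subset⟩
  obtain ⟨i, hi⟩ := hM
  have hex : ∃ i, Disjoint (G.outerBoundary (Set.range (φ i)))
      (coveredVerts M \ ⋃ j, Set.range (φ j)) := ⟨i, (hiff i).mpr hi⟩
  exact (hiff _).mp (Classical.epsilon_spec hex)

end FreeCopy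

theorem numInducedFMatchings_dvd_of_forall_exists_free [Finite V] {ι : Type*} {Y : SimpleGraph W}
    (hF : F.Connected) (φ : ι → Y ↪g G)
    (hU : ∀ i, Disjoint (G.outerBoundary (Set.range (φ i))) (⋃ j, Set.range (φ j)))
    (hfree : ∀ M, IsInducedFMatching F G M →
      ∃ i, Disjoint (G.outerBoundary (Set.range (φ i))) (coveredVerts M)) :
    numInducedFMatchings F Y ∣ numInducedFMatchings F G := by
  classical
  have : Nonempty VF := hF.nonempty
  have : Nonempty ι := (hfree ∅ isInducedFMatching_empty).nonempty
  refine Set.dvd_ncard_of_dvd_ncard_fiber (Set.toFinite _) (outsideFreeCopy φ) fun M₀ hM₀ => ?_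
  set c := outsideFreeCopy φ M₀
  obtain ⟨i, hi⟩ : ∃ i, freeCopy φ M₀ = i := ⟨_, rfl⟩
  have hci : freeCopy φ c = i := (freeCopy_outsideFreeCopy φ M₀).trans hi
  have hcM₀ : c ⊆ M₀ := outsideFreeCopy_subset φ M₀
  have hc : IsInducedFMatching F G c := hM₀.mono hcM₀
  have hcZ : ∀ H ∈ c, ¬ H.verts ⊆ Set.range (φ i) := fun H hH => by
    simpa [hi] using (Finset.mem_filter.mp hH).2
  have hbd : Disjoint (G.outerBoundary (Set.range (φ i))) (coveredVerts c) := by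
    refine hi ▸ (disjoint_outerBoundary_freeCopy φ hU (hfree M₀ hM₀)).mono_right ?_
    exact Set.biUnion_mono hcM₀ fun _ _ => subset_rfl
  have hcZ' : ∀ H ∈ c, Disjoint H.verts (Set.range (φ i)) := fun H hH =>
    (Subgraph.verts_subset_or_disjoint ((hc.1.1 H hH).preconnected hF.preconnected)
      (hbd.mono_right (Set.subset_biUnion_of_mem hH))).resolve_left (hcZ H hH)
  have hfiber : {M ∈ {M | IsInducedFMatching F G M} | outsideFreeCopy φ M = c} =
      {M | IsInducedFMatching F G M ∧ c ⊆ M ∧ ∀ H ∈ M \ c, H.verts ⊆ Set.range (φ i)} := by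
    ext M
    simp only [Set.mem_ofPred_eq, outsideFreeCopy_eq_iff φ (hci ▸ hcZ), hci]
  rw [hfiber, ncard_extensions_eq (φ _) hc hcZ' hbd]

theorem numInducedFMatchings_dvd_of_spider [Finite V] [Fintype VF] [DecidableRel F.Adj]
    {Y : SimpleGraph W} (hF : F.Connected) (φ : Fin (F.maxDegree + 2) → Y ↪g G)
    (w : Fin (F.maxDegree + 2) → V) (hw : Injective w)
    (hadj : ∀ j : Fin (F.maxDegree + 1), G.Adj (w 0) (w j.succ))
    (hwφ : ∀ i k, w k ∉ Set.range (φ i))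
    (hbd : ∀ i, G.outerBoundary (Set.range (φ i)) ⊆ {w i}) :
    numInducedFMatchings F Y ∣ numInducedFMatchings F G := by
  classical
  refine numInducedFMatchings_dvd_of_forall_exists_free hF φ (fun i => ?_) fun M hM => ?_
  · refine (Set.disjoint_singleton_left.mpr ?_).mono_left (hbd i)
    simpa using fun j => hwφ j i
  suffices ∃ i, w i ∉ coveredVerts M from
    this.imp fun i hi => (Set.disjoint_singleton_left.mpr hi).mono_left (hbd i)
  by_contra! hcov
  obtain ⟨H, hH, hv⟩ := mem_coveredVerts.mp (hcov 0)
  have hle := hM.card_le_maxDegree hH hv (Finset.univ.image (w ∘ Fin.succ)) (by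
    simpa using fun j => ⟨hadj j, hcov j.succ⟩)
  rw [Finset.card_image_of_injective _ (hw.comp (Fin.succ_injective _)), Finset.card_univ,
    Fintype.card_fin] at hle
  omega

lemma SimpleGraph.outerBoundary_image_subset {H : SimpleGraph W} (g : H ↪g G) {r : W}
    (hr : G.outerBoundary (Set.range g)ᶜ ⊆ {g r}) {S : Set W} (hrS : r ∉ S) :
    G.outerBoundary (g '' S) ⊆ g '' H.outerBoundary S := by
  rintro a ⟨haS, b, ⟨y, hy, rfl⟩, hab⟩
  by_cases ha : a ∈ Set.range g
  · obtain ⟨x, rfl⟩ := ha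
    exact ⟨x, ⟨fun hx => haS ⟨x, hx, rfl⟩, y, hy, g.map_rel_iff.mp hab⟩, rfl⟩
  · have hyr : g y = g r := hr ⟨not_not.mpr ⟨y, rfl⟩, a, ha, hab.symm⟩
    exact (hrS (g.injective hyr ▸ hy)).elim

lemma SimpleGraph.IsBridge.outerBoundary_compl_supp_subset {u v : V} (h : G.IsBridge s(u, v)) :
    G.outerBoundary ((G.deleteEdges {s(u, v)}).connectedComponentMk v).suppᶜ ⊆ {v} := by
  rintro a ⟨haW, b, hbW, hab⟩
  rw [Set.notMem_compl_iff, ConnectedComponent.mem_supp_iff, ConnectedComponent.eq] at haW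
  by_cases huv : s(a, b) = s(u, v)
  · rcases Sym2.eq_iff.mp huv with ⟨rfl, rfl⟩ | ⟨rfl, rfl⟩
    · exact (isBridge_iff.mp h haW).elim
    · rfl
  · refine (hbW ?_).elim
    rw [ConnectedComponent.mem_supp_iff, ConnectedComponent.eq]
    have hab' : (G.deleteEdges {s(u, v)}).Adj a b := deleteEdges_adj.mpr ⟨hab, by simpa using huv⟩
    exact hab'.symm.reachable.trans haW

section NullifyingTree

variable {D : ℕ} {VY : Type*} {Y : SimpleGraph VY} {y₀ : Fin (D + 2) → VY}

lemma nullifyingTree'_adj_copy {i : Fin (D + 2)} {y y' : VY} :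
    (nullifyingTree' D Y y₀).Adj (some (.inl (i, y))) (some (.inl (i, y'))) ↔ Y.Adj y y' := by
  rw [nullifyingTree', fromRel_adj]
  exact ⟨fun ⟨_, h⟩ => h.elim And.right fun h => h.2.symm,
    fun h => ⟨by simp [h.ne], Or.inl ⟨rfl, h⟩⟩⟩

def nullifyingCopy (i : Fin (D + 2)) : Y ↪g nullifyingTree' D Y y₀ where
  toFun y := some (.inl (i, y))
  inj' _ _ h := by simpa using h
  map_rel_iff' := nullifyingTree'_adj_copy

@[simp]
lemma nullifyingCopy_apply (i : Fin (D + 2)) (y : VY) :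
    nullifyingCopy (Y := Y) (y₀ := y₀) i y = some (.inl (i, y)) :=
  rfl

def nullifyingHub (i : Fin (D + 2)) : Option ((Fin (D + 2) × VY) ⊕ Fin (D + 1)) :=
  Fin.cases none (fun j => some (.inr j)) i

lemma nullifyingHub_injective : Injective (nullifyingHub (D := D) (VY := VY)) := by
  intro i k h
  cases i using Fin.cases <;> cases k using Fin.cases <;> simp_all [nullifyingHub]

lemma nullifyingTree'_adj_hub (j : Fin (D + 1)) :
    (nullifyingTree' D Y y₀).Adj (nullifyingHub 0) (nullifyingHub j.succ) := by
  simp [nullifyingTree', nullifyingHub]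

lemma nullifyingHub_notMem_range_copy (i k : Fin (D + 2)) :
    nullifyingHub k ∉ Set.range (nullifyingCopy (Y := Y) (y₀ := y₀) i) := by
  rintro ⟨y, hy⟩
  cases k using Fin.cases <;> simp [nullifyingHub] at hy

lemma outerBoundary_range_nullifyingCopy (i : Fin (D + 2)) :
    (nullifyingTree' D Y y₀).outerBoundary (Set.range (nullifyingCopy (Y := Y) (y₀ := y₀) i)) ⊆
      {nullifyingHub i} := by
  rintro p ⟨hp, _, ⟨y, rfl⟩, hadj⟩
  rw [nullifyingCopy_apply, nullifyingTree', fromRel_adj] at hadj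
  rcases p with _ | ⟨i', y'⟩ | j <;> simp_all [nullifyingHub]

end NullifyingTree

theorem numInducedFMatchings_dvd_of_embedding_nullifyingTree' [Finite V] [Fintype VF]
    [DecidableRel F.Adj] (hF : F.Connected) {Y : SimpleGraph W} (y₀ : Fin (F.maxDegree + 2) → W)
    (g : nullifyingTree' F.maxDegree Y y₀ ↪g G)
    (hg : G.outerBoundary (Set.range g)ᶜ ⊆ {g none}) :
    numInducedFMatchings F Y ∣ numInducedFMatchings F G := by
  refine numInducedFMatchings_dvd_of_spider hF (fun i => g.comp (nullifyingCopy i))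
    (g ∘ nullifyingHub) (g.injective.comp nullifyingHub_injective)
    (fun j => g.map_rel_iff.mpr (nullifyingTree'_adj_hub j)) (fun i k => ?_) fun i => ?_
  · rw [Embedding.coe_comp, Set.range_comp, comp_apply, g.injective.mem_set_image]
    exact nullifyingHub_notMem_range_copy i k
  · rw [Embedding.coe_comp, Set.range_comp, comp_apply, ← Set.image_singleton]
    exact (outerBoundary_image_subset g hg (nullifyingHub_notMem_range_copy i 0)).trans
      (Set.image_mono (outerBoundary_range_nullifyingCopy i))

end

theorem dvd_numInducedFMatchings_of_nullifying_leaf_general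
    {VF VY VT : Type*} [Fintype VF] [Fintype VT]
    (F : SimpleGraph VF) [DecidableRel F.Adj] (hF : F.IsTree)
    (m : ℕ)
    (Y : SimpleGraph VY) (hYm : m ∣ numInducedFMatchings F Y)
    (y₀ : Fin (F.maxDegree + 2) → VY)
    (T : SimpleGraph VT) (hT : T.IsTree) (u v : VT) (huv : T.Adj u v)
    (e : SimpleGraph.induce (((T.deleteEdges {s(u, v)}).connectedComponentMk v).supp) T
        ≃g nullifyingTree' F.maxDegree Y y₀)
    (he : e ⟨v, rfl⟩ = none) :
    m ∣ numInducedFMatchings F T := by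
  let g := (Embedding.induce _).comp e.symm.toEmbedding
  have hv : g none = v := by
    simp [g, ← he]
  have hrange : Set.range g = ((T.deleteEdges {s(u, v)}).connectedComponentMk v).supp := by
    rw [Embedding.coe_comp, Set.range_comp]
    simp only [Iso.toEmbedding, RelIso.coe_toRelEmbedding, e.symm.surjective.range_eq,
      Set.image_univ]
    exact Subtype.range_coe
  refine hYm.trans (numInducedFMatchings_dvd_of_embedding_nullifyingTree' hF.connected y₀ g ?_)
  rw [hrange, hv]
  exact (isAcyclic_iff_forall_adj_isBridge.mp hT.isAcyclic huv).outerBoundary_compl_supp_subset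

/-- Lemma 3.1 of the paper: let `F` be a tree, `m > 0`, and `Y` a tree with
`m ∣ s'(F,Y)` where `s'` counts induced `F`-matchings.  If a tree `T` has an
edge `{u,v}` such that `T^{(u,v)}` (the component of `v` in `T` minus the edge
`{u,v}`, rooted at `v`) is isomorphic as a rooted tree to the nullifying tree
`Z'` built from `Δ(F) + 2` copies of `Y`, then `m ∣ s'(F,T)`. -/
theorem dvd_numInducedFMatchings_of_nullifying_leaf
    {VF VY VT : Type*} [Fintype VF] [Fintype VY] [Fintype VT]
    (F : SimpleGraph VF) [DecidableRel F.Adj] (hF : F.IsTree)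
    (m : ℕ) (hm : 0 < m)
    (Y : SimpleGraph VY) (hY : Y.IsTree) (hYm : m ∣ numInducedFMatchings F Y)
    (y₀ : Fin (F.maxDegree + 2) → VY)
    (T : SimpleGraph VT) (hT : T.IsTree) (u v : VT) (huv : T.Adj u v)
    (e : SimpleGraph.induce (((T.deleteEdges {s(u, v)}).connectedComponentMk v).supp) T
        ≃g nullifyingTree' F.maxDegree Y y₀)
    (he : e ⟨v, rfl⟩ = none) :
    m ∣ numInducedFMatchings F T :=
  dvd_numInducedFMatchings_of_nullifying_leaf_general F hF m Y hYm y₀ T hT u v huv e he
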